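/- The ideal of p-compact maps is the surjective hull of the right p-nuclear maps: Let 1 ≤ p < ∞ and let T : X → Y be a bounded linear map between Banach spaces. Let Q_X : ℓ_1(B_X) → X be the canonical metric surjection Q_X(α) = ∑_{x ∈ B_X} α_x x. Then T is p-compact if and only if T ∘ Q_X : ℓ_1(B_X) → Y is right p-nuclear, and in that case κ_p(T) = ν^p(T ∘ Q_X). -/

import Mathlib

noncomputable section

open scoped ENNReal NNReal

/-- The conjugate exponent `p'` of `p : ℝ≥0∞`, characterized by `1/p + 1/p' = 1`
(with the conventions `1' = ∞` and `∞' = 1`). -/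
def conjExp (p : ℝ≥0∞) : ℝ≥0∞ := (1 - 1/p)⁻¹

theorem one_le_conjExp (p : ℝ≥0∞) : 1 ≤ conjExp p := by
  rw [conjExp]
  rw [ENNReal.one_le_inv]
  exact tsub_le_self

instance (p : ℝ≥0∞) : Fact (1 ≤ conjExp p) := ⟨one_le_conjExp p⟩

/-- The `ℓ_p`-norm `(∑ₙ ‖y n‖^p)^(1/p)` of a `p`-summable sequence `y`. -/
def lpNorm {X : Type*} [NormedAddCommGroup X] (p : ℝ≥0∞) (y : ℕ → X)
    (hy : Memℓp y p) : ℝ :=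
  ‖(⟨y, hy⟩ : lp (fun _ : ℕ => X) p)‖

/-- The `p`-convex hull of a sequence `x` in `X`, taken with respect to the exponent `q`
(in the applications below, `q` is the conjugate exponent of `p`):
the set of all sums `∑ₙ αₙ • xₙ` with `(αₙ) ∈ ℓ_q`, `‖(αₙ)‖_q ≤ 1`. -/
def pCo (𝕜 : Type*) [RCLike 𝕜] {X : Type*} [NormedAddCommGroup X] [NormedSpace 𝕜 X]
    (q : ℝ≥0∞) (x : ℕ → X) : Set X :=
  {v | ∃ α : lp (fun _ : ℕ => 𝕜) q, ‖α‖ ≤ 1 ∧ HasSum (fun n => α n • x n) v}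

/-- A set `K ⊆ X` is relatively `p`-compact if it is contained in the `p`-convex hull of a
`p`-summable sequence of `X`. -/
def RelPCompact (𝕜 : Type*) [RCLike 𝕜] {X : Type*} [NormedAddCommGroup X]
    [NormedSpace 𝕜 X] (p : ℝ≥0∞) (K : Set X) : Prop :=
  ∃ x : ℕ → X, Memℓp x p ∧ K ⊆ pCo 𝕜 (conjExp p) x

/-- A bounded linear map is `p`-compact if the image of the closed unit ball is contained in
the `p`-convex hull of a `p`-summable sequence of the target space. -/
def IsPCompact (𝕜 : Type*) [RCLike 𝕜] {X Y : Type*}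
    [SeminormedAddCommGroup X] [NormedSpace 𝕜 X]
    [NormedAddCommGroup Y] [NormedSpace 𝕜 Y] (p : ℝ≥0∞) (T : X →L[𝕜] Y) : Prop :=
  ∃ y : ℕ → Y, Memℓp y p ∧ T '' Metric.closedBall 0 1 ⊆ pCo 𝕜 (conjExp p) y

/-- The `p`-compact norm `κ_p(T) = inf { ‖(yₙ)‖_p : T(B_X) ⊆ p-co((yₙ)) }`. -/
def kappa (𝕜 : Type*) [RCLike 𝕜] {X Y : Type*}
    [SeminormedAddCommGroup X] [NormedSpace 𝕜 X]
    [NormedAddCommGroup Y] [NormedSpace 𝕜 Y] (p : ℝ≥0∞) (T : X →L[𝕜] Y) : ℝ :=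
  sInf {c : ℝ | ∃ (y : ℕ → Y) (hy : Memℓp y p),
    T '' Metric.closedBall 0 1 ⊆ pCo 𝕜 (conjExp p) y ∧ c = lpNorm p y hy}

/-- `C` is an upper bound for the weak `ℓ_q`-norm of the sequence `(x'ₙ)` of functionals,
i.e. `‖(x'ₙ(x))ₙ‖_q ≤ C‖x‖` for every `x` (equivalently,
`sup_{‖x‖ ≤ 1} ‖(x'ₙ(x))ₙ‖_q ≤ C`). -/
def WeakLpBound (𝕜 : Type*) [RCLike 𝕜] {X : Type*} [SeminormedAddCommGroup X]
    [NormedSpace 𝕜 X] (q : ℝ≥0∞) (x' : ℕ → (X →L[𝕜] 𝕜)) (C : ℝ) : Prop :=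
  ∀ x : X, ∃ h : Memℓp (fun n => x' n x) q, lpNorm q (fun n => x' n x) h ≤ C * ‖x‖

/-- A bounded linear map `T : X → Y` is right `p`-nuclear if `T x = ∑ₙ x'ₙ(x) yₙ` for some
weakly `p'`-summable sequence `(x'ₙ)` in `X'` and some `(yₙ)` with `∑ₙ ‖yₙ‖^p < ∞`. -/
def IsRightPNuclear (𝕜 : Type*) [RCLike 𝕜] {X Y : Type*}
    [SeminormedAddCommGroup X] [NormedSpace 𝕜 X]
    [NormedAddCommGroup Y] [NormedSpace 𝕜 Y] (p : ℝ≥0∞) (T : X →L[𝕜] Y) : Prop :=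
  ∃ (x' : ℕ → (X →L[𝕜] 𝕜)) (y : ℕ → Y) (C : ℝ), 0 ≤ C ∧
    WeakLpBound 𝕜 (conjExp p) x' C ∧ Memℓp y p ∧
    ∀ x : X, HasSum (fun n => x' n x • y n) (T x)

/-- The right `p`-nuclear norm
`ν^p(T) = inf ‖(x'ₙ)‖^w_{p'} ⬝ (∑ₙ ‖yₙ‖^p)^{1/p}` over all representations of `T`. -/
def nuP (𝕜 : Type*) [RCLike 𝕜] {X Y : Type*}
    [SeminormedAddCommGroup X] [NormedSpace 𝕜 X]
    [NormedAddCommGroup Y] [NormedSpace 𝕜 Y] (p : ℝ≥0∞) (T : X →L[𝕜] Y) : ℝ :=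
  sInf {c : ℝ | ∃ (x' : ℕ → (X →L[𝕜] 𝕜)) (y : ℕ → Y) (C : ℝ) (hy : Memℓp y p), 0 ≤ C ∧
    WeakLpBound 𝕜 (conjExp p) x' C ∧
    (∀ x : X, HasSum (fun n => x' n x • y n) (T x)) ∧
    c = C * lpNorm p y hy}

/-! A point `x` of `B_X` is the image under `Q_X` of the unit vector `eₓ` of `ℓ_1(B_X)`, so a
right `p`-nuclear representation `∑ₙ x'ₙ(α) yₙ` of `T ∘ Q_X` with weak constant `C` writes `T x` as
`∑ₙ (x'ₙ(eₓ)/C) (C yₙ)` with `‖(x'ₙ(eₓ)/C)ₙ‖_{p'} ≤ 1`. Conversely, if `T x = ∑ₙ βₓₙ yₙ` with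
`‖βₓ‖_{p'} ≤ 1` for every `x ∈ B_X`, then `Φ α = ∑ₓ αₓ βₓ` is a contraction `ℓ_1(B_X) → ℓ_{p'}`, so
its coordinates `x'ₙ` have weak `p'`-norm at most `1`; composed with the synthesis map
`γ ↦ ∑ₙ γₙ yₙ`, bounded on `ℓ_{p'}` by Hölder, `Φ` agrees with `T ∘ Q_X` on unit vectors and hence
everywhere. Both passages preserve the size of the data (`‖C y‖_p = C ‖y‖_p`), so `κ_p(T)` and
`ν^p(T ∘ Q_X)` are infima of the same set. -/

lemma holderConjugate_conjExp {p : ℝ≥0∞} (hp : 1 ≤ p) : p.HolderConjugate (conjExp p) := by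
  rw [ENNReal.holderConjugate_iff, conjExp, inv_inv, one_div]
  exact add_tsub_cancel_of_le (ENNReal.inv_le_one.mpr hp)

namespace lp

variable {ι 𝕜 : Type*} {E F : ι → Type*} {H : Type*} [RCLike 𝕜]
  [∀ i, NormedAddCommGroup (E i)] [∀ i, NormedSpace 𝕜 (E i)]
  [∀ i, NormedAddCommGroup (F i)] [∀ i, NormedSpace 𝕜 (F i)]
  [NormedAddCommGroup H] [NormedSpace 𝕜 H] [CompleteSpace H]
  {p q : ℝ≥0∞} [Fact (1 ≤ p)] [Fact (1 ≤ q)] [p.HolderConjugate q]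
  (B : (i : ι) → E i →L[𝕜] F i →L[𝕜] H) {K : ℝ≥0} (hBK : ∀ i, ‖B i‖ ≤ K)

lemma hasSum_dualPairing (e : lp E p) (f : lp F q) :
    HasSum (fun i => B i (e i) (f i)) (dualPairing p q B hBK e f) :=
  (Memℓp.summable_of_one ((lp.memℓp e).holder 1 (lp.memℓp f) B hBK)).hasSum

lemma dualPairing_single [DecidableEq ι] (i : ι) (a : E i) (f : lp F q) :
    dualPairing p q B hBK (lp.single p i a) f = B i a (f i) := by
  rw [dualPairing_apply, tsum_eq_single i fun j hj => by simp [Pi.single_eq_of_ne hj],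
    lp.single_apply_self]

end lp

section

variable {𝕜 : Type*} [RCLike 𝕜] {Y : Type*} [NormedAddCommGroup Y] [NormedSpace 𝕜 Y]

lemma lpNorm_const_smul {p : ℝ≥0∞} [Fact (1 ≤ p)] {y : ℕ → Y} (hy : Memℓp y p) {C : ℝ}
    (hC : 0 ≤ C) :
    lpNorm p (fun n => (C : 𝕜) • y n) (hy.const_smul (C : 𝕜)) = C * lpNorm p y hy := by
  have hsmul : (⟨fun n => (C : 𝕜) • y n, hy.const_smul (C : 𝕜)⟩ : lp (fun _ : ℕ => Y) p) =
      (C : 𝕜) • ⟨y, hy⟩ := rfl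
  rw [lpNorm, lpNorm, hsmul, lp.norm_const_smul (zero_lt_one.trans_le Fact.out).ne',
    RCLike.norm_ofReal, abs_of_nonneg hC]

lemma mem_pCo_const_smul_of_hasSum {q : ℝ≥0∞} [Fact (1 ≤ q)] {y : ℕ → Y} {v : Y} {C : ℝ}
    (a : lp (fun _ : ℕ => 𝕜) q) (ha : ‖a‖ ≤ C) (hv : HasSum (fun n => a n • y n) v) :
    v ∈ pCo 𝕜 q (fun n => (C : 𝕜) • y n) := by
  have hC : 0 ≤ C := (norm_nonneg a).trans ha
  -- for `C = 0` the junk value `C⁻¹ = 0` is harmless, since then `a = 0`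
  refine ⟨(C : 𝕜)⁻¹ • a, ?_, ?_⟩
  · rw [norm_smul, norm_inv, RCLike.norm_ofReal, abs_of_nonneg hC]
    exact inv_mul_le_one_of_le₀ ha hC
  · convert hv using 2 with n
    rcases hC.eq_or_lt with rfl | hC
    · simp [norm_le_zero_iff.mp ha]
    · simp only [lp.coeFn_smul, Pi.smul_apply, smul_smul, smul_eq_mul]
      rw [mul_right_comm, inv_mul_cancel₀ (RCLike.ofReal_ne_zero.mpr hC.ne'), one_mul]

lemma apply_single_of_hasSum {ι X : Type*} [NormedAddCommGroup X] [NormedSpace 𝕜 X]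
    [DecidableEq ι] {v : ι → X} {Q : lp (fun _ : ι => 𝕜) 1 → X}
    (hQ : ∀ α, HasSum (fun i => α i • v i) (Q α)) (i : ι) (c : 𝕜) :
    Q (lp.single (E := fun _ : ι => 𝕜) 1 i c) = c • v i :=
  (hQ _).unique <| by
    simpa [lp.single_apply_self] using
      hasSum_single (f := fun j => lp.single (E := fun _ : ι => 𝕜) 1 i c j • v j) i
        fun j hj => by simp [Pi.single_eq_of_ne hj]

open ContinuousLinearMap in
theorem exists_weakLpBound_one_of_apply_single_mem_pCo [CompleteSpace Y] {ι : Type*}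
    [DecidableEq ι] {p q : ℝ≥0∞} [Fact (1 ≤ p)] [Fact (1 ≤ q)] [p.HolderConjugate q]
    (R : lp (fun _ : ι => 𝕜) 1 →L[𝕜] Y) {y : ℕ → Y} (hy : Memℓp y p)
    (hR : ∀ i, R (lp.single 1 i 1) ∈ pCo 𝕜 q y) :
    ∃ x' : ℕ → (lp (fun _ : ι => 𝕜) 1 →L[𝕜] 𝕜),
      WeakLpBound 𝕜 q x' 1 ∧ ∀ α, HasSum (fun n => x' n α • y n) (R α) := by
  choose β hβ hRβ using hR
  have hβ_mem : Memℓp β ∞ := memℓp_infty ⟨1, by rintro - ⟨i, rfl⟩; exact hβ i⟩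
  have hsmul_q : ∀ _ : ι, ‖lsmul 𝕜 𝕜 (E := lp (fun _ : ℕ => 𝕜) q)‖ ≤ ((1 : ℝ≥0) : ℝ) :=
    fun _ => by simpa using opNorm_lsmul_le
  have hsmul_Y : ∀ _ : ℕ, ‖lsmul 𝕜 𝕜 (E := Y)‖ ≤ ((1 : ℝ≥0) : ℝ) :=
    fun _ => by simpa using opNorm_lsmul_le
  let Φ : lp (fun _ : ι => 𝕜) 1 →L[𝕜] lp (fun _ : ℕ => 𝕜) q :=
    (lp.dualPairing 1 ∞ _ hsmul_q).flip ⟨β, hβ_mem⟩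
  let S : lp (fun _ : ℕ => 𝕜) q →L[𝕜] Y := (lp.dualPairing q p _ hsmul_Y).flip ⟨y, hy⟩
  have hSΦ : S ∘L Φ = R := by
    refine lp.ext_continuousLinearMap ENNReal.one_ne_top fun i => ext fun c => ?_
    have hS : S (β i) = R (lp.single 1 i 1) :=
      (lp.hasSum_dualPairing _ hsmul_Y (β i) ⟨y, hy⟩).unique (hRβ i)
    have hsingle : lp.single (E := fun _ : ι => 𝕜) 1 i c = c • lp.single 1 i 1 := by
      rw [← lp.single_smul, smul_eq_mul, mul_one]
    simp [Φ, lp.dualPairing_single, hS, hsingle]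
  refine ⟨fun n => lp.evalCLM 𝕜 _ q n ∘L Φ, fun α => ⟨lp.memℓp (Φ α), ?_⟩, fun α => ?_⟩
  · have hβ_norm : ‖(⟨β, hβ_mem⟩ : lp (fun _ : ι => lp (fun _ : ℕ => 𝕜) q) ∞)‖ ≤ 1 :=
      lp.norm_le_of_forall_le zero_le_one hβ
    have hΦ : ‖Φ‖ ≤ 1 := by
      refine (le_opNorm _ _).trans (mul_le_one₀ ?_ (norm_nonneg _) hβ_norm)
      simpa [opNorm_flip] using lp.norm_dualPairing _ hsmul_q
    show ‖Φ α‖ ≤ 1 * ‖α‖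
    exact Φ.le_of_opNorm_le hΦ α
  · rw [← hSΦ]
    exact lp.hasSum_dualPairing _ hsmul_Y (Φ α) ⟨y, hy⟩

theorem image_closedBall_subset_pCo_of_weakLpBound {X : Type*} [NormedAddCommGroup X]
    [NormedSpace 𝕜 X] {q : ℝ≥0∞} [Fact (1 ≤ q)]
    {Q : lp (fun _ : ↥(Metric.closedBall (0 : X) 1) => 𝕜) 1 →L[𝕜] X}
    (hQ : ∀ α : lp (fun _ : ↥(Metric.closedBall (0 : X) 1) => 𝕜) 1,
      HasSum (fun i : ↥(Metric.closedBall (0 : X) 1) => α i • (i : X)) (Q α))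
    (T : X →L[𝕜] Y) {x' : ℕ → (lp (fun _ : ↥(Metric.closedBall (0 : X) 1) => 𝕜) 1 →L[𝕜] 𝕜)}
    {y : ℕ → Y} {C : ℝ} (hW : WeakLpBound 𝕜 q x' C)
    (hs : ∀ α, HasSum (fun n => x' n α • y n) (T.comp Q α)) :
    T '' Metric.closedBall 0 1 ⊆ pCo 𝕜 q (fun n => (C : 𝕜) • y n) := by
  classical
  rintro - ⟨x, hx, rfl⟩
  obtain ⟨ha, hle⟩ := hW (lp.single 1 ⟨x, hx⟩ 1)
  refine mem_pCo_const_smul_of_hasSum ⟨_, ha⟩ (by simpa [lpNorm, lp.norm_single] using hle) ?_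
  simpa [apply_single_of_hasSum hQ] using hs (lp.single 1 ⟨x, hx⟩ 1)

end

theorem isPCompact_iff_comp_canonical_surjection_isRightPNuclear_general {𝕜 X Y : Type*} [RCLike 𝕜]
    [NormedAddCommGroup X] [NormedSpace 𝕜 X]
    [NormedAddCommGroup Y] [NormedSpace 𝕜 Y] [CompleteSpace Y]
    (p : ℝ≥0∞) (hp1 : 1 ≤ p)
    (Q : lp (fun _ : ↥(Metric.closedBall (0 : X) 1) => 𝕜) 1 →L[𝕜] X)
    (hQ : ∀ α : lp (fun _ : ↥(Metric.closedBall (0 : X) 1) => 𝕜) 1,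
      HasSum (fun i : ↥(Metric.closedBall (0 : X) 1) => α i • (i : X)) (Q α))
    (T : X →L[𝕜] Y) :
    (IsPCompact 𝕜 p T ↔ IsRightPNuclear 𝕜 p (T.comp Q)) ∧
    (IsPCompact 𝕜 p T → kappa 𝕜 p T = nuP 𝕜 p (T.comp Q)) := by
  classical
  have : Fact (1 ≤ p) := ⟨hp1⟩
  have := holderConjugate_conjExp hp1
  have toNuclear : ∀ y, Memℓp y p → T '' Metric.closedBall 0 1 ⊆ pCo 𝕜 (conjExp p) y →
      ∃ x', WeakLpBound 𝕜 (conjExp p) x' 1 ∧ ∀ α, HasSum (fun n => x' n α • y n) (T.comp Q α) :=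
    fun y hy hsub => exists_weakLpBound_one_of_apply_single_mem_pCo (T.comp Q) hy fun i => by
      simpa [apply_single_of_hasSum hQ] using hsub ⟨i, i.2, rfl⟩
  refine ⟨⟨fun ⟨y, hy, hsub⟩ => ?_, fun ⟨x', y, C, _, hW, hy, hs⟩ => ?_⟩, fun _ => ?_⟩
  · obtain ⟨x', hW, hs⟩ := toNuclear y hy hsub
    exact ⟨x', y, 1, zero_le_one, hW, hy, hs⟩
  · exact ⟨_, hy.const_smul _, image_closedBall_subset_pCo_of_weakLpBound hQ T hW hs⟩
  · unfold kappa nuP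
    congr 1
    ext c
    constructor
    · rintro ⟨y, hy, hsub, rfl⟩
      obtain ⟨x', hW, hs⟩ := toNuclear y hy hsub
      exact ⟨x', y, 1, hy, zero_le_one, hW, hs, (one_mul _).symm⟩
    · rintro ⟨x', y, C, hy, hC, hW, hs, rfl⟩
      exact ⟨_, hy.const_smul _, image_closedBall_subset_pCo_of_weakLpBound hQ T hW hs,
        (lpNorm_const_smul hy hC).symm⟩

/-- **`p`-compact maps form the surjective hull of the right `p`-nuclear maps.** Let
`Q_X : ℓ_1(B_X) → X` be the canonical metric surjection `Q_X(α) = ∑_{x ∈ B_X} α_x • x`. Then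
`T : X → Y` is `p`-compact iff `T ∘ Q_X` is right `p`-nuclear, in which case
`κ_p(T) = ν^p(T ∘ Q_X)`. -/
theorem isPCompact_iff_comp_canonical_surjection_isRightPNuclear {𝕜 X Y : Type*} [RCLike 𝕜]
    [NormedAddCommGroup X] [NormedSpace 𝕜 X] [CompleteSpace X]
    [NormedAddCommGroup Y] [NormedSpace 𝕜 Y] [CompleteSpace Y]
    (p : ℝ≥0∞) (hp1 : 1 ≤ p) (hp : p ≠ ∞)
    (Q : lp (fun _ : ↥(Metric.closedBall (0 : X) 1) => 𝕜) 1 →L[𝕜] X)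
    (hQ : ∀ α : lp (fun _ : ↥(Metric.closedBall (0 : X) 1) => 𝕜) 1,
      HasSum (fun i : ↥(Metric.closedBall (0 : X) 1) => α i • (i : X)) (Q α))
    (T : X →L[𝕜] Y) :
    (IsPCompact 𝕜 p T ↔ IsRightPNuclear 𝕜 p (T.comp Q)) ∧
    (IsPCompact 𝕜 p T → kappa 𝕜 p T = nuP 𝕜 p (T.comp Q)) :=
  isPCompact_iff_comp_canonical_surjection_isRightPNuclear_general p hp1 Q hQ T
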